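/- arXiv:2011.01311 — 6 statements merged into one kernel-verified Lean document; each statement's English description precedes it below -/
import Mathlib

section
/- Let E be a field, p a prime, and E_⟨p⟩ a maximal prime-to-p extension of E inside a separable closure E_s. If F ⊆ E_s is a finite extension of E_⟨p⟩, then [F : E_⟨p⟩] is a power of p. -/
/-! The Galois closure `M` of `F / E_⟨p⟩` has a Sylow `p`-subgroup `P`, whose fixed field has
degree prime to `p` over `E_⟨p⟩`. Maximality forces every `x` with `[E_⟨p⟩(x) : E_⟨p⟩]` prime to
`p` into `E_⟨p⟩`: an element `y ∈ E_⟨p⟩(x)` keeps its degree over any finite prime-to-`p`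
subextension `L ⊆ E_⟨p⟩` containing the coefficients of its minimal polynomial, so `L(y)` is
prime to `p` over `E` and `E_⟨p⟩(x)` is again a prime-to-`p` union. Hence the fixed field of `P`
is trivial, `Gal(M / E_⟨p⟩) = P`, and `[F : E_⟨p⟩]` divides `|P|`. -/

/-- An intermediate field of a separable closure is a "prime-to-`p` union" if every
element lies in a finite subextension whose degree over the base is prime to `p`. -/
def IsPrimeToPUnion (p : ℕ) (E Es : Type) [Field E] [Field Es] [Algebra E Es]
    (K : IntermediateField E Es) : Prop :=
  ∀ x ∈ K, ∃ L : IntermediateField E Es, L ≤ K ∧ x ∈ L ∧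
    FiniteDimensional E L ∧ Nat.Coprime (Module.finrank E L) p

open IntermediateField Module Polynomial

theorem IntermediateField.finrank_adjoin_simple_eq_of_minpoly_mem_lifts
    {F K Ω : Type*} [Field F] [Field K] [Field Ω] [Algebra F K] [Algebra K Ω] [Algebra F Ω]
    [IsScalarTower F K Ω] {y : Ω} (hy : IsIntegral F y)
    (h : minpoly K y ∈ lifts (algebraMap F K)) :
    finrank F F⟮y⟯ = finrank K K⟮y⟯ := by
  rw [adjoin.finrank hy, adjoin.finrank hy.tower_top, ← minpoly.map_algebraMap hy h,
    natDegree_map]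

theorem IntermediateField.finrank_adjoin_simple_algebraMap
    {K M Ω : Type*} [Field K] [Field M] [Field Ω] [Algebra K M] [Algebra M Ω] [Algebra K Ω]
    [IsScalarTower K M Ω] {z : M} (hz : IsIntegral K z) :
    finrank K K⟮algebraMap M Ω z⟯ = finrank K K⟮z⟯ := by
  rw [adjoin.finrank hz, adjoin.finrank hz.algebraMap,
    minpoly.algebraMap_eq (algebraMap M Ω).injective]

theorem IntermediateField.eq_bot_of_finrank_coprime {p : ℕ} {K M : Type*} [Field K] [Field M]
    [Algebra K M]
    (h : ∀ z : M, (finrank K K⟮z⟯).Coprime p → z ∈ (⊥ : IntermediateField K M))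
    (L : IntermediateField K M) (hL : (finrank K L).Coprime p) : L = ⊥ :=
  eq_bot_iff.2 fun z hz =>
    h z (hL.coprime_dvd_left (finrank_dvd_of_le_right (adjoin_simple_le_iff.2 hz)))

theorem IsGalois.exists_finrank_eq_pow_of_forall_coprime {p : ℕ} [Fact p.Prime]
    {K M : Type*} [Field K] [Field M] [Algebra K M] [FiniteDimensional K M] [IsGalois K M]
    (h : ∀ z : M, (finrank K K⟮z⟯).Coprime p → z ∈ (⊥ : IntermediateField K M)) :
    ∃ n : ℕ, finrank K M = p ^ n := by
  obtain ⟨P⟩ : Nonempty (Sylow p Gal(M/K)) := inferInstance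
  have hindex : finrank K (fixedField (P : Subgroup Gal(M/K))) = P.index := by
    rw [finrank_eq_fixingSubgroup_index, fixingSubgroup_fixedField]
  have hbot : fixedField (P : Subgroup Gal(M/K)) = ⊥ :=
    eq_bot_of_finrank_coprime h _
      (hindex ▸ ((Fact.out : p.Prime).coprime_iff_not_dvd.2 P.not_dvd_index).symm)
  have htop : (P : Subgroup Gal(M/K)) = ⊤ := by
    rw [← fixingSubgroup_fixedField (P : Subgroup Gal(M/K)), hbot, fixingSubgroup_bot]
  obtain ⟨n, hn⟩ := P.isPGroup'.exists_card_eq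
  exact ⟨n, by rw [← IsGalois.card_aut_eq_finrank, ← hn, htop, Subgroup.card_top]⟩

namespace IsPrimeToPUnion

variable {p : ℕ} {E Ω : Type} [Field E] [Field Ω] [Algebra E Ω] [Algebra.IsSeparable E Ω]
  {K : IntermediateField E Ω}

theorem exists_le_of_finset (hK : IsPrimeToPUnion p E Ω K) (S : Finset K) :
    ∃ L ≤ K, (∀ s ∈ S, (s : Ω) ∈ L) ∧ FiniteDimensional E L ∧ (finrank E L).Coprime p := by
  set M := adjoin E (((↑) : K → Ω) '' S)
  have : FiniteDimensional E M :=
    finiteDimensional_adjoin fun x _ => Algebra.IsIntegral.isIntegral x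
  obtain ⟨α, hα⟩ := Field.exists_primitive_element E M
  have hMK : M ≤ K := adjoin_le_iff.2 (by rintro _ ⟨s, -, rfl⟩; exact s.2)
  obtain ⟨L, hLK, hαL, hL⟩ := hK α (hMK α.2)
  have hM : M = E⟮(α : Ω)⟯ := by rw [← lift_adjoin_simple, hα, lift_top]
  have hML : M ≤ L := hM ▸ adjoin_simple_le_iff.2 hαL
  exact ⟨L, hLK, fun s hs => hML (subset_adjoin E _ ⟨s, hs, rfl⟩), hL⟩

theorem restrictScalars_adjoin_simple (hK : IsPrimeToPUnion p E Ω K) {x : Ω}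
    (hx : (finrank K K⟮x⟯).Coprime p) : IsPrimeToPUnion p E Ω (K⟮x⟯.restrictScalars E) := by
  intro y hy
  have hy_coprime : (finrank K K⟮y⟯).Coprime p :=
    hx.coprime_dvd_left (finrank_dvd_of_le_right (adjoin_simple_le_iff.2 hy))
  obtain ⟨L, hLK, hcoeff, hLfin, hLcop⟩ := hK.exists_le_of_finset (minpoly K y).coeffs
  have hyL : IsIntegral L y := (Algebra.IsIntegral.isIntegral (R := E) y).tower_top
  have hdeg : finrank L L⟮y⟯ = finrank K K⟮y⟯ := by
    let _ : Algebra L K := (inclusion hLK).toRingHom.toAlgebra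
    have : IsScalarTower L K Ω := IsScalarTower.of_algebraMap_eq fun _ => rfl
    exact finrank_adjoin_simple_eq_of_minpoly_mem_lifts hyL
      ((lifts_iff_coeffs_subset_range _).2 fun c hc => ⟨⟨c, hcoeff c hc⟩, rfl⟩)
  have : FiniteDimensional L L⟮y⟯ := adjoin.finiteDimensional hyL
  have hfin : FiniteDimensional E L⟮y⟯ := Module.Finite.trans L L⟮y⟯
  refine ⟨L⟮y⟯.restrictScalars E, ?_, mem_adjoin_simple_self L y, hfin, ?_⟩
  · rw [restrictScalars_adjoin]
    exact adjoin_le_iff.2 (Set.union_subset (fun z hz => (K⟮x⟯).algebraMap_mem ⟨z, hLK hz⟩)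
      (Set.singleton_subset_iff.2 hy))
  · change (finrank E L⟮y⟯).Coprime p
    rw [← finrank_mul_finrank E L, hdeg]
    exact hLcop.mul_left hy_coprime

theorem mem_of_finrank_coprime (hK : IsPrimeToPUnion p E Ω K)
    (hmax : ∀ K' : IntermediateField E Ω, IsPrimeToPUnion p E Ω K' → K ≤ K' → K' = K)
    {x : Ω} (hx : (finrank K K⟮x⟯).Coprime p) : x ∈ K := by
  have hle : K ≤ K⟮x⟯.restrictScalars E := fun z hz => (K⟮x⟯).algebraMap_mem ⟨z, hz⟩
  rw [← hmax _ (hK.restrictScalars_adjoin_simple hx) hle]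
  exact mem_adjoin_simple_self K x

end IsPrimeToPUnion

theorem degree_pow_p_over_maximal_prime_to_p
    (p : ℕ) (hp : p.Prime) (E Es : Type) [Field E] [Field Es] [Algebra E Es]
    [IsSepClosure E Es]
    (Ep : IntermediateField E Es)
    (hEp : IsPrimeToPUnion p E Es Ep)
    (hmax : ∀ K : IntermediateField E Es, IsPrimeToPUnion p E Es K → Ep ≤ K → K = Ep)
    (F : IntermediateField (↥Ep) Es) [FiniteDimensional (↥Ep) F] :
    ∃ n : ℕ, Module.finrank (↥Ep) F = p ^ n := by
  have : Fact p.Prime := ⟨hp⟩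
  have : IsSepClosure Ep Es :=
    ⟨IsSepClosure.sep_closed E, Algebra.isSeparable_tower_top_of_isSeparable E Ep Es⟩
  have : IsGalois Ep (normalClosure Ep F Es) := {}
  have hmem_bot : ∀ z : normalClosure Ep F Es, (finrank Ep Ep⟮z⟯).Coprime p →
      z ∈ (⊥ : IntermediateField Ep (normalClosure Ep F Es)) := fun z hz => by
    rw [← finrank_adjoin_simple_algebraMap (Ω := Es) (IsIntegral.of_finite Ep z)] at hz
    exact mem_bot.2 ⟨⟨_, hEp.mem_of_finrank_coprime hmax hz⟩, Subtype.ext rfl⟩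
  obtain ⟨n, hn⟩ := IsGalois.exists_finrank_eq_pow_of_forall_coprime hmem_bot
  obtain ⟨m, -, hm⟩ := (Nat.dvd_prime_pow hp).1
    (hn ▸ finrank_dvd_of_le_right (le_normalClosure F))
  exact ⟨m, hm⟩
end

section
/- Let K be a field that is p-primary, i.e. K has no nontrivial finite extension of degree prime to p, and let F be a nontrivial finite separable extension of K of degree p^n. Then there is a tower of fields K = F₁ ⊆ F₂ ⊆ ... ⊆ F_n = F with [F_i : F_{i-1}] = p for each i. -/
/-!
Embed `F` into its Galois closure `M` over `K`. Since `K` is `p`-primary, `[M : K]` is a power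
of `p`, so `Gal(M/K)` is a `p`-group. In a finite `p`-group, Sylow's theorem lets one climb from
any subgroup to the whole group in steps of index `p`; starting from `Gal(M/F)`, the Galois
correspondence, under which relative degrees of fixed fields are relative indices, turns this
chain into the required tower between `K` and `F`.
-/

/-- A field `K` is `p`-primary if every finite extension of `K` has degree a power of `p`. -/
def IsPPrimary (p : ℕ) (K : Type) [Field K] : Prop :=
  ∀ (L : Type) [Field L] [Algebra K L], FiniteDimensional K L →
    ∃ k : ℕ, Module.finrank K L = p ^ k

open Module IntermediateField

namespace IsPGroup

variable {p : ℕ} [hp : Fact p.Prime] {G : Type*} [Group G] [Finite G]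

theorem exists_le_relIndex_eq_prime (hG : IsPGroup p G) {H : Subgroup G} (hH : H ≠ ⊤) :
    ∃ H' : Subgroup G, H ≤ H' ∧ H.relIndex H' = p := by
  obtain ⟨a, ha⟩ := (hG.to_subgroup H).exists_card_eq
  obtain ⟨k, hk⟩ := hG.index H
  have hk0 : k ≠ 0 := by
    rintro rfl
    exact hH (Subgroup.index_eq_one.1 (by rw [hk, pow_zero]))
  have hdvd : p ^ (a + 1) ∣ Nat.card G := by
    rw [← H.card_mul_index, ha, hk, pow_succ]
    exact mul_dvd_mul_left _ (dvd_pow_self p hk0)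
  obtain ⟨H', hH', hle⟩ := Sylow.exists_subgroup_card_pow_succ hdvd ha
  have hcard := Subgroup.relIndex_mul_relIndex _ _ _ bot_le hle
  rw [Subgroup.relIndex_bot_left, Subgroup.relIndex_bot_left, ha, hH', pow_succ] at hcard
  exact ⟨H', hle, Nat.eq_of_mul_eq_mul_left (pow_pos hp.out.pos a) hcard⟩

theorem exists_chain_relIndex_eq_prime (hG : IsPGroup p G) (n : ℕ) {H : Subgroup G}
    (hH : H.index = p ^ n) :
    ∃ c : Fin (n + 1) → Subgroup G, c 0 = H ∧ c (Fin.last n) = ⊤ ∧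
      ∀ i : Fin n, c i.castSucc ≤ c i.succ ∧ (c i.castSucc).relIndex (c i.succ) = p := by
  induction n generalizing H with
  | zero =>
    exact ⟨fun _ => H, rfl, Subgroup.index_eq_one.1 hH, fun i => i.elim0⟩
  | succ n ih =>
    have hH_ne_top : H ≠ ⊤ := by
      rintro rfl
      rw [Subgroup.index_top] at hH
      exact (Nat.one_lt_pow n.succ_ne_zero hp.out.one_lt).ne hH
    obtain ⟨H', hle, hrel⟩ := hG.exists_le_relIndex_eq_prime hH_ne_top
    have hH' : H'.index = p ^ n := by
      refine Nat.eq_of_mul_eq_mul_left hp.out.pos ?_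
      rw [← pow_succ', ← hH, ← Subgroup.relIndex_mul_index hle, hrel]
    obtain ⟨c, rfl, hclast, hcstep⟩ := ih hH'
    refine ⟨Fin.cons H c, rfl, hclast, fun i => ?_⟩
    cases i using Fin.cases with
    | zero => exact ⟨hle, hrel⟩
    | succ j => exact hcstep j

end IsPGroup

theorem IntermediateField.relfinrank_fixedField_eq_relIndex {K M : Type*} [Field K] [Field M]
    [Algebra K M] [FiniteDimensional K M] {S T : Subgroup Gal(M/K)} (h : S ≤ T) :
    relfinrank (fixedField T) (fixedField S) = S.relIndex T := by
  have hfield := relfinrank_mul_finrank_top (fixedField_antitone h)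
  have hgroup := Subgroup.relIndex_mul_relIndex _ _ _ bot_le h
  rw [finrank_fixedField_eq_card, finrank_fixedField_eq_card] at hfield
  rw [Subgroup.relIndex_bot_left, Subgroup.relIndex_bot_left, ← hfield, mul_comm] at hgroup
  exact (Nat.eq_of_mul_eq_mul_right Nat.card_pos hgroup).symm

theorem IsGalois.exists_chain_relfinrank_eq_prime {p : ℕ} [Fact p.Prime] {K M : Type*} [Field K]
    [Field M] [Algebra K M] [FiniteDimensional K M] [IsGalois K M] {m n : ℕ}
    (hM : finrank K M = p ^ m) (L : IntermediateField K M) (hL : finrank K L = p ^ n) :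
    ∃ c : Fin (n + 1) → IntermediateField K M, c 0 = ⊥ ∧ c (Fin.last n) = L ∧
      ∀ i : Fin n, c i.castSucc ≤ c i.succ ∧ relfinrank (c i.castSucc) (c i.succ) = p := by
  have hG : IsPGroup p Gal(M/K) := IsPGroup.of_card (by rw [IsGalois.card_aut_eq_finrank, hM])
  obtain ⟨d, hd0, hdlast, hdstep⟩ := hG.exists_chain_relIndex_eq_prime n
    (L.finrank_eq_fixingSubgroup_index.symm.trans hL)
  refine ⟨fun i => fixedField (d i.rev), ?_, ?_, fun i => ?_⟩
  · simp [hdlast]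
  · simp [hd0, IsGalois.fixedField_fixingSubgroup]
  · obtain ⟨hle, hrel⟩ := hdstep i.rev
    simp only [Fin.rev_castSucc, Fin.rev_succ]
    exact ⟨fixedField_antitone hle, (relfinrank_fixedField_eq_relIndex hle).trans hrel⟩

theorem AlgHom.exists_chain_comap {p n : ℕ} {K F M : Type*} [Field K] [Field F] [Field M]
    [Algebra K F] [Algebra K M] (f : F →ₐ[K] M) (c : Fin (n + 1) → IntermediateField K M)
    (h0 : c 0 = ⊥) (hlast : c (Fin.last n) = f.fieldRange)
    (hstep : ∀ i : Fin n, c i.castSucc ≤ c i.succ ∧ relfinrank (c i.castSucc) (c i.succ) = p) :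
    ∃ c' : Fin (n + 1) → IntermediateField K F, c' 0 = ⊥ ∧ c' (Fin.last n) = ⊤ ∧
      ∀ i : Fin n, c' i.castSucc ≤ c' i.succ ∧ relfinrank (c' i.castSucc) (c' i.succ) = p := by
  have hmono : Monotone c := Fin.monotone_iff_le_succ.2 fun i => (hstep i).1
  refine ⟨fun i => (c i).comap f, ?_, ?_, fun i => ?_⟩ <;> dsimp only
  · rw [h0, ← map_bot f, comap_map]
  · rw [hlast]
    exact eq_top_iff.2 fun x _ => ⟨x, rfl⟩
  · obtain ⟨hle, hrel⟩ := hstep i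
    refine ⟨fun x hx => hle hx, ?_⟩
    rw [relfinrank_comap_comap_eq_relfinrank_of_le _ _ f (hlast ▸ hmono (Fin.le_last _)), hrel]

theorem exists_tower_of_degree_p_steps_general
    (p : ℕ) (hp : p.Prime) (K F : Type) [Field K] [Field F] [Algebra K F]
    (hK : IsPPrimary p K) [FiniteDimensional K F] [Algebra.IsSeparable K F]
    (n : ℕ) (hdeg : Module.finrank K F = p ^ n) :
    ∃ c : Fin (n + 1) → IntermediateField K F,
      c 0 = ⊥ ∧ c (Fin.last n) = ⊤ ∧
      ∀ i : Fin n, c i.castSucc ≤ c i.succ ∧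
        IntermediateField.relfinrank (c i.castSucc) (c i.succ) = p := by
  have : Fact p.Prime := ⟨hp⟩
  -- A separable closure of `F` is one of `K` too, so the normal closure of `F` in it is
  -- a finite Galois extension of `K` containing `F`.
  have : IsSepClosure K (SeparableClosure F) := ⟨inferInstance, .trans K F _⟩
  let M := normalClosure K F (SeparableClosure F)
  let f : F →ₐ[K] M := IsScalarTower.toAlgHom K F M
  obtain ⟨m, hm⟩ := hK M inferInstance
  have hf : finrank K f.fieldRange = p ^ n :=
    (AlgEquiv.ofInjectiveField f).toLinearEquiv.finrank_eq.symm.trans hdeg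
  obtain ⟨c, h0, hlast, hstep⟩ := IsGalois.exists_chain_relfinrank_eq_prime hm f.fieldRange hf
  exact f.exists_chain_comap c h0 hlast hstep

theorem exists_tower_of_degree_p_steps
    (p : ℕ) (hp : p.Prime) (K F : Type) [Field K] [Field F] [Algebra K F]
    (hK : IsPPrimary p K) [FiniteDimensional K F] [Algebra.IsSeparable K F]
    (n : ℕ) (hn : 1 ≤ n) (hdeg : Module.finrank K F = p ^ n) :
    ∃ c : Fin (n + 1) → IntermediateField K F,
      c 0 = ⊥ ∧ c (Fin.last n) = ⊤ ∧
      ∀ i : Fin n, c i.castSucc ≤ c i.succ ∧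
        IntermediateField.relfinrank (c i.castSucc) (c i.succ) = p :=
  exists_tower_of_degree_p_steps_general p hp K F hK n hdeg
end

section
/- Let p be a prime, E a p-primary field, and F a finite separable extension of E with F ≠ E. Then there exists an intermediate field E ⊆ F' ⊆ F such that F'/E is a normal extension of degree p. -/
open IntermediateField Module

theorem IsPGroup.exists_le_normal_index_eq_prime {G : Type*} [Group G] [Finite G] {p : ℕ}
    [hp : Fact p.Prime] (hG : IsPGroup p G) {H : Subgroup G} (hH : H ≠ ⊤) :
    ∃ K : Subgroup G, H ≤ K ∧ K.Normal ∧ K.index = p := by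
  obtain ⟨n, hn⟩ := hG.exists_card_eq
  obtain ⟨k, hk⟩ := (hG.to_subgroup H).exists_card_eq
  have hkn : k < n := by
    have := H.card_le_card_group.lt_of_ne (mt H.card_eq_iff_eq_top.mp hH)
    rwa [hk, hn, Nat.pow_lt_pow_iff_right hp.out.one_lt] at this
  obtain ⟨m, rfl⟩ : ∃ m, n = m + 1 := ⟨n - 1, by omega⟩
  obtain ⟨K, hK, hHK⟩ := Sylow.exists_subgroup_card_pow_prime_le p
    (hn ▸ pow_dvd_pow p m.le_succ) H hk (by omega)
  have hKindex : K.index = p := by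
    have := K.card_mul_index
    rw [hK, hn, pow_succ] at this
    exact Nat.eq_of_mul_eq_mul_left (pow_pos hp.out.pos m) this
  refine ⟨K, hHK, K.normal_of_index_eq_minFac_card ?_, hKindex⟩
  rw [hKindex, hn, hp.out.pow_minFac m.succ_ne_zero]

theorem IsPPrimary.isPGroup_gal {p : ℕ} [Fact p.Prime] {E : Type} [Field E]
    (hE : IsPPrimary p E) (N : Type) [Field N] [Algebra E N] [FiniteDimensional E N]
    [IsGalois E N] : IsPGroup p Gal(N/E) := by
  obtain ⟨k, hk⟩ := hE N inferInstance
  exact IsPGroup.iff_card.mpr ⟨k, by rw [IsGalois.card_aut_eq_finrank, hk]⟩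

theorem IsGalois.exists_le_isGalois_finrank_eq_prime {p : ℕ} [Fact p.Prime] {E N : Type*}
    [Field E] [Field N] [Algebra E N] [FiniteDimensional E N] [IsGalois E N]
    (hG : IsPGroup p Gal(N/E)) {K : IntermediateField E N} (hK : K ≠ ⊥) :
    ∃ K' ≤ K, IsGalois E K' ∧ finrank E K' = p := by
  have hH : K.fixingSubgroup ≠ ⊤ := by
    intro h
    rw [← IsGalois.fixedField_fixingSubgroup K, h, fixedField_top] at hK
    exact hK rfl
  obtain ⟨M, hKM, hM, hMindex⟩ := hG.exists_le_normal_index_eq_prime hH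
  refine ⟨fixedField M, ?_, IsGalois.of_fixedField_normal_subgroup M, ?_⟩
  · exact (IsGalois.fixedField_fixingSubgroup K) ▸ fixedField_le hKM
  · rw [finrank_eq_fixingSubgroup_index, fixingSubgroup_fixedField, hMindex]

noncomputable def IntermediateField.comapEquivOfLeFieldRange {K L L' : Type*} [Field K]
    [Field L] [Field L'] [Algebra K L] [Algebra K L'] (f : L →ₐ[K] L') {S : IntermediateField K L'}
    (h : S ≤ f.fieldRange) : S.comap f ≃ₐ[K] S :=
  (equivMap _ f).trans (equivOfEq (map_comap_eq_self h))

theorem AlgHom.exists_normal_finrank_eq_prime_of_isPGroup {p : ℕ} [Fact p.Prime] {E F N : Type*}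
    [Field E] [Field F] [Field N] [Algebra E F] [Algebra E N] [FiniteDimensional E N]
    [IsGalois E N]
    (hG : IsPGroup p Gal(N/E)) (ψ : F →ₐ[E] N) (hF : 1 < finrank E F) :
    ∃ F' : IntermediateField E F, Normal E F' ∧ finrank E F' = p := by
  have hψ : ψ.fieldRange ≠ ⊥ := by
    rw [Ne, ← IntermediateField.finrank_eq_one_iff, ← ψ.equivFieldRange.toLinearEquiv.finrank_eq]
    exact hF.ne'
  obtain ⟨K, hK, hKgal, hKp⟩ := IsGalois.exists_le_isGalois_finrank_eq_prime hG hψ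
  let e := comapEquivOfLeFieldRange ψ hK
  exact ⟨K.comap ψ, Normal.of_algEquiv e.symm, e.toLinearEquiv.finrank_eq.trans hKp⟩

theorem exists_normal_subextension_of_degree_p
    (p : ℕ) (hp : p.Prime) (E F : Type) [Field E] [Field F] [Algebra E F]
    (hE : IsPPrimary p E) [FiniteDimensional E F] [Algebra.IsSeparable E F]
    (hne : 1 < Module.finrank E F) :
    ∃ F' : IntermediateField E F, Normal E F' ∧ Module.finrank E F' = p := by
  have : Fact p.Prime := ⟨hp⟩
  let N := normalClosure E F (SeparableClosure E)
  let ψ : F →ₐ[E] N := (normalClosure.algHomEquiv E F _).symm IsSepClosed.lift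
  exact ψ.exists_normal_finrank_eq_prime_of_isPGroup (hE.isPGroup_gal N) hne
end

section
/- Let E be a field of characteristic p > 0 and α ∈ GW(E) an element of rank 0 (i.e. in the kernel of the rank homomorphism GW(E) → ℤ). Then α is nilpotent; in fact for α = ⟨t⟩ - 1 one has α³ = 0. -/
/-- Axiomatization of the Grothendieck–Witt ring of a field `E`: a commutative ring `R`
together with the classes `diag a = ⟨a⟩` of the rank-one bilinear forms `(x, y) ↦ a·x·y`
for `a ∈ E^×`, subject to the standard presentation relations, such that these classes
generate `R` additively. -/
structure GWRingData (E : Type) [Field E] (R : Type) [CommRing R] : Type where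
  /-- the class `⟨a⟩` of the rank-one form given by `a` (only meaningful for `a ≠ 0`) -/
  diag : E → R
  diag_one : diag 1 = 1
  diag_mul : ∀ a b : E, a ≠ 0 → b ≠ 0 → diag (a * b) = diag a * diag b
  diag_sq : ∀ a : E, a ≠ 0 → diag (a ^ 2) = 1
  diag_chain : ∀ a b : E, a ≠ 0 → b ≠ 0 → a + b ≠ 0 →
    diag a + diag b = diag (a + b) + diag (a * b * (a + b))
  generates : AddSubgroup.closure (diag '' {a : E | a ≠ 0}) = ⊤

/-- `n_ε = Σ_{i=1}^{n} ⟨-1⟩^{i-1}` in the Grothendieck–Witt ring. -/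
def GWRingData.nEps {E : Type} [Field E] {R : Type} [CommRing R]
    (gw : GWRingData E R) (n : ℕ) : R :=
  ∑ i ∈ Finset.range n, (gw.diag (-1)) ^ i

theorem nilpotent_of_rank_zero (p : ℕ) (hp : p.Prime)
    (E : Type) [Field E] [CharP E p]
    (R : Type) [CommRing R] (gw : GWRingData E R)
    (rank : R →+* ℤ) (hrank : ∀ a : E, a ≠ 0 → rank (gw.diag a) = 1)
    (α : R) (hα : rank α = 0) :
    IsNilpotent α ∧ ∀ t : E, t ≠ 0 → (gw.diag t - 1) ^ 3 = 0 := by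
  have hneg1 : (-1 : E) ≠ 0 := by simp
  have hsq : ∀ a : E, a ≠ 0 → gw.diag a * gw.diag a = 1 := by
    intro a ha
    rw [← gw.diag_mul a a ha ha, ← sq, gw.diag_sq a ha]
  -- Step 1: 2 = 2⟨-1⟩, since -1 is a sum of two squares in char p
  have htwo : (1 : R) + 1 = gw.diag (-1) + gw.diag (-1) := by
    haveI : Fact p.Prime := ⟨hp⟩
    obtain ⟨a, b, hab⟩ := ZMod.sq_add_sq p (-1 : ZMod p)
    set f := ZMod.castHom (dvd_refl p) E with hf
    have hab' : (f a) ^ 2 + (f b) ^ 2 = -1 := by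
      have := congrArg f hab
      push_cast at this
      simpa using this
    by_cases ha : f a = 0
    · have hb2 : (f b) ^ 2 = -1 := by rw [ha] at hab'; simpa using hab'
      have hb : f b ≠ 0 := by
        intro h
        rw [h] at hb2
        simp at hb2
      have : gw.diag (-1 : E) = 1 := by rw [← hb2, gw.diag_sq _ hb]
      rw [this]
    · by_cases hb : f b = 0
      · have ha2 : (f a) ^ 2 = -1 := by rw [hb] at hab'; simpa using hab'
        have : gw.diag (-1 : E) = 1 := by rw [← ha2, gw.diag_sq _ ha]
        rw [this]
      · have ha2 : (f a) ^ 2 ≠ 0 := pow_ne_zero _ ha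
        have hb2 : (f b) ^ 2 ≠ 0 := pow_ne_zero _ hb
        have hsum : (f a) ^ 2 + (f b) ^ 2 ≠ 0 := by rw [hab']; exact hneg1
        have hc := gw.diag_chain ((f a) ^ 2) ((f b) ^ 2) ha2 hb2 hsum
        rw [gw.diag_sq _ ha, gw.diag_sq _ hb, hab'] at hc
        have harg : (f a) ^ 2 * (f b) ^ 2 * (-1 : E) = (f a * f b) ^ 2 * (-1) := by ring
        rw [harg, gw.diag_mul _ _ (pow_ne_zero _ (mul_ne_zero ha hb)) hneg1,
          gw.diag_sq _ (mul_ne_zero ha hb), one_mul] at hc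
        exact hc
  -- Step 2: hyperbolic relation ⟨t⟩ + ⟨-t⟩ = 1 + ⟨-1⟩
  have hyp : ∀ t : E, t ≠ 0 → gw.diag t + gw.diag (-t) = 1 + gw.diag (-1) := by
    intro t ht
    by_cases ht1 : t = 1
    · subst ht1; rw [gw.diag_one]
    · have h1t : (1 : E) - t ≠ 0 := sub_ne_zero.mpr (Ne.symm ht1)
      have hmul : t * (1 - t) ≠ 0 := mul_ne_zero ht h1t
      have hii := gw.diag_chain t (1 - t) ht h1t (by
        intro h
        apply one_ne_zero (α := E)
        rw [← h]; ring)
      have e1 : t + (1 - t) = 1 := by ring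
      rw [e1, gw.diag_one] at hii
      have e2 : t * (1 - t) * 1 = t * (1 - t) := by ring
      rw [e2] at hii
      -- hii : diag t + diag (1-t) = 1 + diag (t*(1-t))
      have hnt : (-t : E) ≠ 0 := neg_ne_zero.mpr ht
      have hiii := gw.diag_chain (-t) (t * (1 - t)) hnt hmul (by
        intro h
        have : -(t * t) = (0 : E) := by rw [← h]; ring
        exact mul_ne_zero ht ht (by simpa using this))
      have e3 : -t + t * (1 - t) = (-1) * t ^ 2 := by ring
      have e4 : -t * (t * (1 - t)) * (-t + t * (1 - t)) = (t ^ 2) ^ 2 * (1 - t) := by ring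
      rw [e4, e3] at hiii
      rw [gw.diag_mul (-1) (t ^ 2) hneg1 (pow_ne_zero _ ht), gw.diag_sq t ht, mul_one] at hiii
      rw [gw.diag_mul ((t ^ 2) ^ 2) (1 - t) (pow_ne_zero _ (pow_ne_zero _ ht)) h1t,
        gw.diag_sq (t ^ 2) (pow_ne_zero _ ht), one_mul] at hiii
      -- hiii : diag (-t) + diag (t*(1-t)) = diag (-1) + diag (1-t)
      linear_combination hii + hiii
  -- Step 3: (⟨t⟩ - 1)^3 = 0
  have cube : ∀ t : E, t ≠ 0 → (gw.diag t - 1) ^ 3 = 0 := by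
    intro t ht
    have h1 := hsq t ht
    have h2 : gw.diag t + gw.diag (-1) * gw.diag t = 1 + gw.diag (-1) := by
      have hm : gw.diag (-t) = gw.diag (-1) * gw.diag t := by
        rw [← gw.diag_mul (-1) t hneg1 ht, neg_one_mul]
      have := hyp t ht
      rw [hm] at this
      exact this
    linear_combination (gw.diag t - 3) * h1 + 2 * h2 + (gw.diag t - 1) * htwo
  refine ⟨?_, cube⟩
  -- Step 4: rank-zero elements are nilpotent
  let S : AddSubgroup R :=
    { carrier := {x | x - ((rank x : ℤ) : R) ∈ nilradical R}
      zero_mem' := by simp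
      add_mem' := by
        intro x y hx hy
        have h : (x + y) - ((rank (x + y) : ℤ) : R)
            = (x - ((rank x : ℤ) : R)) + (y - ((rank y : ℤ) : R)) := by
          rw [map_add]; push_cast; ring
        show (x + y) - ((rank (x + y) : ℤ) : R) ∈ nilradical R
        rw [h]
        exact add_mem hx hy
      neg_mem' := by
        intro x hx
        have h : (-x) - ((rank (-x) : ℤ) : R) = -(x - ((rank x : ℤ) : R)) := by
          rw [map_neg]; push_cast; ring
        show (-x) - ((rank (-x) : ℤ) : R) ∈ nilradical R
        rw [h]
        exact neg_mem hx }
  have hle : AddSubgroup.closure (gw.diag '' {a : E | a ≠ 0}) ≤ S := by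
    rw [AddSubgroup.closure_le]
    rintro _ ⟨a, ha, rfl⟩
    show gw.diag a - ((rank (gw.diag a) : ℤ) : R) ∈ nilradical R
    rw [hrank a ha]
    push_cast
    exact mem_nilradical.mpr ⟨3, cube a ha⟩
  rw [gw.generates] at hle
  have hmem : α ∈ S := hle (AddSubgroup.mem_top α)
  have : α - ((rank α : ℤ) : R) ∈ nilradical R := hmem
  rw [hα] at this
  simpa using (mem_nilradical.mp (by simpa using this))
end

section
/- Let E be a field of characteristic 0 and F = E(x) a simple extension of odd degree n. Then the Scharlau/trace transfer of the unit form satisfies Tr_{F/E}(⟨1⟩) = n_ε in GW(E), where n_ε = Σ_{i=1}^n ⟨-1⟩^{i-1}. -/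
/-- Axiomatization of the Grothendieck–Witt ring of a field `E`, together with the
class map sending (the Gram matrix of) a nondegenerate symmetric bilinear form to its
class in `GW(E)`. -/
structure GWClsData (E : Type) [Field E] (R : Type) [CommRing R] : Type where
  /-- the class `⟨a⟩` of the rank-one form given by `a` (only meaningful for `a ≠ 0`) -/
  diag : E → R
  diag_one : diag 1 = 1
  diag_mul : ∀ a b : E, a ≠ 0 → b ≠ 0 → diag (a * b) = diag a * diag b
  diag_sq : ∀ a : E, a ≠ 0 → diag (a ^ 2) = 1
  diag_chain : ∀ a b : E, a ≠ 0 → b ≠ 0 → a + b ≠ 0 →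
    diag a + diag b = diag (a + b) + diag (a * b * (a + b))
  /-- the class of the symmetric bilinear form with Gram matrix `M` -/
  cls : {n : ℕ} → Matrix (Fin n) (Fin n) E → R
  cls_diagonal : ∀ {n : ℕ} (d : Fin n → E), (∀ i, d i ≠ 0) →
    cls (Matrix.diagonal d) = ∑ i, diag (d i)
  cls_congr : ∀ {n : ℕ} (M P : Matrix (Fin n) (Fin n) E), IsUnit P.det →
    cls (P.transpose * M * P) = cls M

/-- `n_ε = Σ_{i=1}^{n} ⟨-1⟩^{i-1}` in the Grothendieck–Witt ring. -/
def GWClsData.nEps {E : Type} [Field E] {R : Type} [CommRing R]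
    (gw : GWClsData E R) (n : ℕ) : R :=
  ∑ i ∈ Finset.range n, (gw.diag (-1)) ^ i

/-!
In the power basis `1, x, …, x^{n-1}` the Gram matrix `s(x^{i+j})` vanishes above the
antidiagonal and is `1` on it. Working from the outside in, `e_l` and `e_{n-1-l}` form a
hyperbolic pair, and the change of basis `e_j ↦ e_j + w_j e_l` clears row and column `n-1-l`
off the antidiagonal. So the form is congruent to the exchange matrix. For `n = 2m + 1` the
basis `e_i + ½ e_{n-1-i}`, `e_{n-1-i} - ½ e_i` (`i < m`), `e_m` diagonalises the latter as
`(m + 1)⟨1⟩ + m⟨-1⟩ = n_ε`.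
-/

open Matrix

section

theorem Matrix.IsSymm.updateRow_updateCol {α n : Type*} [DecidableEq n] {M : Matrix n n α}
    (hM : M.IsSymm) (a : n) (v : n → α) : ((M.updateRow a v).updateCol a v).IsSymm :=
  IsSymm.ext fun i j => by
    simp only [updateCol_apply, updateRow_apply]
    split_ifs <;> simp_all [hM.apply]

variable {α n : Type*} [CommRing α] [Fintype n] [DecidableEq n]

theorem Matrix.det_one_add_vecMulVec (u v : n → α) : (1 + vecMulVec u v).det = 1 + v ⬝ᵥ u := by
  rw [vecMulVec_eq Unit, det_one_add_replicateCol_mul_replicateRow]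

theorem Matrix.transpose_mul_mul_one_add_vecMulVec (M : Matrix n n α) (u w : n → α) :
    (1 + vecMulVec u w)ᵀ * M * (1 + vecMulVec u w) =
      M + vecMulVec w (u ᵥ* M) + vecMulVec (M *ᵥ u) w + (u ⬝ᵥ M *ᵥ u) • vecMulVec w w := by
  simp only [transpose_add, transpose_one, transpose_vecMulVec, add_mul, mul_add, one_mul,
    mul_one, vecMulVec_mul, mul_vecMulVec, vecMulVec_mulVec, smul_vecMulVec, dotProduct_mulVec,
    op_smul_eq_smul]
  abel

theorem Matrix.exists_det_eq_one_transpose_mul_mul_eq_updateRow_updateCol {K : Type*} [Field K]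
    [NeZero (2 : K)] {M : Matrix n n K} (hM : M.IsSymm) {l a : n} (hla : l ≠ a)
    (hl : M l = Pi.single a 1) (v : n → K) (hv : v l = 1) :
    ∃ P : Matrix n n K, P.det = 1 ∧ Pᵀ * M * P = (M.updateRow a v).updateCol a v := by
  -- The columns of `P` are `e_j + w j • e_l`; as `e_l` pairs only with `e_a`, this adds `w` to
  -- row and column `a` (twice at `(a, a)`).
  set w := Function.update (v - M a) a ((v a - M a a) / 2) with hw
  have hwl : w l = 0 := by
    rw [hw, Function.update_of_ne hla, Pi.sub_apply, hv, hM.apply l a, hl, Pi.single_eq_same,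
      sub_self]
  refine ⟨1 + vecMulVec (Pi.single l 1) w, ?_, ?_⟩
  · rw [det_one_add_vecMulVec, dotProduct_single_one, hwl, add_zero]
  have hrow : M.row l = Pi.single a 1 := hl
  have hcol : M.col l = Pi.single a 1 := by
    ext i
    rw [col_apply, hM.apply l i, hl]
  rw [transpose_mul_mul_one_add_vecMulVec, single_one_vecMul, mulVec_single_one,
    single_one_dotProduct, hrow, hcol, Pi.single_eq_of_ne hla, zero_smul, add_zero]
  ext i j
  simp only [Matrix.add_apply, vecMulVec_apply, updateCol_apply, updateRow_apply, hw,
    Pi.single_apply]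
  by_cases hi : i = a <;> by_cases hj : j = a
  · subst hi hj
    simp only [Function.update_self, if_true]
    field_simp
    ring
  · subst hi
    simp [hj]
  · subst hj
    simp [hi, hM.apply i j]
  · simp [hi, hj]

end

def exchangeMatrix (α : Type*) [Zero α] [One α] (n : ℕ) : Matrix (Fin n) (Fin n) α :=
  Matrix.of fun i j => if j = i.rev then 1 else 0

section

variable {α : Type*}

theorem exchangeMatrix_apply [Zero α] [One α] {n : ℕ} (i j : Fin n) :
    exchangeMatrix α n i j = if j = i.rev then 1 else 0 := rfl

theorem isSymm_exchangeMatrix [Zero α] [One α] (n : ℕ) : (exchangeMatrix α n).IsSymm := by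
  ext i j
  simp only [transpose_apply, exchangeMatrix_apply, ← Fin.rev_eq_iff, @eq_comm _ j]

theorem exchangeMatrix_mul [NonAssocSemiring α] {n : ℕ} (M : Matrix (Fin n) (Fin n) α) :
    exchangeMatrix α n * M = M.submatrix Fin.rev id := by
  ext i j
  simp [mul_apply, exchangeMatrix_apply]

theorem exchangeMatrix_mul_self [NonAssocSemiring α] (n : ℕ) :
    exchangeMatrix α n * exchangeMatrix α n = 1 := by
  ext i j
  simp [exchangeMatrix_mul, exchangeMatrix_apply, one_apply, @eq_comm _ j]

theorem exists_transpose_mul_exchangeMatrix_mul_eq_diagonal {K : Type*} [Field K]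
    [NeZero (2 : K)] (m : ℕ) :
    ∃ P, Pᵀ * exchangeMatrix K (2 * m + 1) * P =
      diagonal fun i : Fin (2 * m + 1) => if m < (i : ℕ) then -1 else 1 := by
  set J := exchangeMatrix K (2 * m + 1)
  set s : Fin (2 * m + 1) → K := fun i => if m < (i : ℕ) then -2⁻¹ else 1
  set t : Fin (2 * m + 1) → K := fun i =>
    if (i : ℕ) < m then 2⁻¹ else if (i : ℕ) = m then 0 else 1
  refine ⟨diagonal s + J * diagonal t, ?_⟩
  have expand : (diagonal s + J * diagonal t)ᵀ * J * (diagonal s + J * diagonal t) =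
      diagonal s * J * diagonal s + diagonal t * J * diagonal t +
        (2 : K) • diagonal fun i => s i * t i := by
    simp only [transpose_add, transpose_mul, diagonal_transpose, J, (isSymm_exchangeMatrix _).eq,
      add_mul, mul_add, mul_assoc, ← mul_assoc (exchangeMatrix K _) (exchangeMatrix K _),
      exchangeMatrix_mul_self, one_mul, diagonal_mul_diagonal, mul_comm (t _) (s _), two_smul]
    abel
  rw [expand]
  ext i j
  simp only [Matrix.add_apply, Matrix.smul_apply, smul_eq_mul, diagonal_mul, mul_diagonal,
    diagonal_apply, J, exchangeMatrix_apply, s, t, Fin.ext_iff, Fin.val_rev]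
  split_ifs <;> first | omega | simp [two_ne_zero]

end

namespace GWClsData

variable {E : Type} [Field E] {R : Type} [CommRing R] (gw : GWClsData E R)

theorem diag_neg_one_mul_self : gw.diag (-1) * gw.diag (-1) = 1 := by
  rw [← gw.diag_mul _ _ (by norm_num) (by norm_num), neg_one_mul, neg_neg, gw.diag_one]

theorem nEps_two_mul_add_one (m : ℕ) :
    gw.nEps (2 * m + 1) = (m + 1) • 1 + m • gw.diag (-1) := by
  induction m with
  | zero => simp [nEps]
  | succ m ih =>
    have hodd : gw.diag (-1) ^ (2 * m + 1) = gw.diag (-1) := by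
      rw [pow_succ, pow_mul, sq, diag_neg_one_mul_self, one_pow, one_mul]
    have heven : gw.diag (-1) ^ (2 * m + 1 + 1) = 1 := by
      rw [pow_succ, hodd, diag_neg_one_mul_self]
    rw [nEps] at ih ⊢
    rw [show 2 * (m + 1) + 1 = 2 * m + 1 + 1 + 1 by ring, Finset.sum_range_succ,
      Finset.sum_range_succ, ih, hodd, heven]
    simp only [add_nsmul, one_nsmul]
    abel

theorem cls_eq_sum_diag_of_transpose_mul_mul_eq_diagonal {n : ℕ}
    {M P : Matrix (Fin n) (Fin n) E} {d : Fin n → E} (hd : ∀ i, d i ≠ 0)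
    (h : Pᵀ * M * P = diagonal d) : gw.cls M = ∑ i, gw.diag (d i) := by
  have hP : IsUnit P.det := by
    have hdet := congrArg det h
    rw [det_mul, det_mul, det_transpose, det_diagonal] at hdet
    refine isUnit_iff_ne_zero.2 fun h0 => ?_
    rw [h0, zero_mul, zero_mul] at hdet
    exact Finset.prod_ne_zero_iff.2 (fun i _ => hd i) hdet.symm
  rw [← gw.cls_congr M P hP, h, gw.cls_diagonal d hd]

theorem cls_exchangeMatrix [NeZero (2 : E)] (m : ℕ) :
    gw.cls (exchangeMatrix E (2 * m + 1)) = gw.nEps (2 * m + 1) := by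
  obtain ⟨P, hP⟩ := exists_transpose_mul_exchangeMatrix_mul_eq_diagonal (K := E) m
  rw [gw.cls_eq_sum_diag_of_transpose_mul_mul_eq_diagonal (fun i => by split_ifs <;> norm_num) hP,
    nEps_two_mul_add_one, Fin.sum_univ_eq_sum_range (fun i => gw.diag (if m < i then -1 else 1)),
    show 2 * m + 1 = (m + 1) + m by ring, Finset.sum_range_add]
  have hfirst : ∀ i ∈ Finset.range (m + 1), gw.diag (if m < i then -1 else 1) = 1 :=
    fun i hi => by rw [if_neg (by simp at hi; omega), gw.diag_one]
  have hsecond : ∀ i ∈ Finset.range m,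
      gw.diag (if m < m + 1 + i then -1 else 1) = gw.diag (-1) :=
    fun i _ => by rw [if_pos (by omega)]
  rw [Finset.sum_congr rfl hfirst, Finset.sum_congr rfl hsecond, Finset.sum_const,
    Finset.sum_const, Finset.card_range, Finset.card_range]

theorem cls_updateRow_updateCol [NeZero (2 : E)] {n : ℕ} {M : Matrix (Fin n) (Fin n) E}
    (hM : M.IsSymm) {l a : Fin n} (hla : l ≠ a) (hl : M l = Pi.single a 1) (v : Fin n → E)
    (hv : v l = 1) : gw.cls ((M.updateRow a v).updateCol a v) = gw.cls M := by
  obtain ⟨P, hP, hPM⟩ := exists_det_eq_one_transpose_mul_mul_eq_updateRow_updateCol hM hla hl v hv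
  rw [← hPM, gw.cls_congr M P (hP ▸ isUnit_one)]

/-- The reduction invariant: `M` agrees with the exchange matrix where `i + j ≤ n - 1` and in
its last `l` rows and columns. -/
theorem cls_eq_cls_exchangeMatrix_of_agree [NeZero (2 : E)] {n : ℕ}
    (M : Matrix (Fin n) (Fin n) E) (hM : M.IsSymm) (l : ℕ)
    (hMJ : ∀ i j : Fin n, (i : ℕ) + j < n ∨ n ≤ i + l ∨ n ≤ j + l →
      M i j = exchangeMatrix E n i j) :
    gw.cls M = gw.cls (exchangeMatrix E n) := by
  by_cases hl : n ≤ 2 * l + 1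
  · congr
    ext i j
    exact hMJ i j (by omega)
  set l' : Fin n := ⟨l, by omega⟩
  have hl' : (l' : ℕ) = l := rfl
  have hrow : M l' = Pi.single l'.rev 1 := by
    ext j
    rw [hMJ _ _ (by omega), exchangeMatrix_apply, Pi.single_apply]
  have hla : l' ≠ l'.rev := by
    simp only [ne_eq, Fin.ext_iff, Fin.val_rev]
    omega
  have hv : exchangeMatrix E n l'.rev l' = 1 := by
    rw [exchangeMatrix_apply, Fin.rev_rev, if_pos rfl]
  rw [← gw.cls_updateRow_updateCol hM hla hrow _ hv]
  refine cls_eq_cls_exchangeMatrix_of_agree _ (hM.updateRow_updateCol _ _) (l + 1)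
    fun i j hij => ?_
  rw [updateCol_apply, updateRow_apply]
  split_ifs with hj hi
  · rw [hj, (isSymm_exchangeMatrix n).apply]
  · rw [hi]
  · simp only [Fin.ext_iff, Fin.val_rev] at hi hj
    exact hMJ i j (by omega)
termination_by n - l

end GWClsData

theorem transfer_one_odd_degree_general (E : Type) [Field E] [CharZero E]
    (F : Type) [Field F] [Algebra E F] (x : F)
    (n : ℕ) (hpos : 0 < n)
    (hodd : Odd n)
    (b : Module.Basis (Fin n) E F) (hb : ∀ i : Fin n, b i = x ^ (i : ℕ))
    (R : Type) [CommRing R] (gw : GWClsData E R) :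
    gw.cls (Matrix.of fun i j : Fin n =>
        b.coord ⟨n - 1, Nat.sub_lt hpos Nat.one_pos⟩ (x ^ ((i : ℕ) + (j : ℕ))))
      = gw.nEps n := by
  obtain ⟨m, rfl⟩ := hodd
  have hHankel : ∀ i j : Fin (2 * m + 1), (i : ℕ) + j < 2 * m + 1 →
      b.coord ⟨2 * m + 1 - 1, Nat.sub_lt hpos Nat.one_pos⟩ (x ^ ((i : ℕ) + j)) =
        exchangeMatrix E _ i j := by
    intro i j hij
    rw [← hb ⟨i + j, hij⟩, Module.Basis.coord_apply, Module.Basis.repr_self, Finsupp.single_apply,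
      exchangeMatrix_apply]
    exact if_congr (by simp only [Fin.ext_iff, Fin.val_rev]; omega) rfl rfl
  exact (gw.cls_eq_cls_exchangeMatrix_of_agree _ (IsSymm.ext fun i j => by simp [add_comm]) 0
    fun i j hij => hHankel i j (by omega)).trans (gw.cls_exchangeMatrix m)

/-- Lam VII.2.2, odd-degree case: for a simple extension `F = E(x)` of odd degree `n`
over a field of characteristic zero, the (Scharlau/geometric) transfer of the unit
form — whose Gram matrix in the power basis `1, x, …, x^{n-1}` is
`(i, j) ↦ s(x^{i+j})`, where `s` is the `E`-linear functional dual to `x^{n-1}` —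
equals `n_ε` in `GW(E)`. -/
theorem transfer_one_odd_degree (E : Type) [Field E] [CharZero E]
    (F : Type) [Field F] [Algebra E F] (x : F)
    (hadj : IntermediateField.adjoin E {x} = ⊤)
    (n : ℕ) (hpos : 0 < n) [FiniteDimensional E F]
    (hdeg : Module.finrank E F = n) (hodd : Odd n)
    (b : Module.Basis (Fin n) E F) (hb : ∀ i : Fin n, b i = x ^ (i : ℕ))
    (R : Type) [CommRing R] (gw : GWClsData E R) :
    gw.cls (Matrix.of fun i j : Fin n =>
        b.coord ⟨n - 1, Nat.sub_lt hpos Nat.one_pos⟩ (x ^ ((i : ℕ) + (j : ℕ))))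
      = gw.nEps n :=
  transfer_one_odd_degree_general E F x n hpos hodd b hb R gw
end

section
/- Let E ⊆ K be fields with K = E(x) a finite simple extension of degree d, and let M_* be the Milnor–Witt K-theory of K (or more generally a graded module over K^MW_*(E) generated by symbols). Then K^MW_*(K) is generated as a left K^MW_*(E)-module by elements of the form η^m·[p₁(x)]·[p₂(x)]⋯[p_n(x)], where the p_i are monic irreducible polynomials in E[t] with deg(p₁) < deg(p₂) < ⋯ < deg(p_n) ≤ d − 1. -/
/-!
Let `G` be the additive subgroup spanned by the products `r [p₁(x)] ⋯ [pₙ(x)]`, where `r` lies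
in the subring generated by `η` and the symbols of elements of `E`, and the `pᵢ` are monic
irreducible of strictly increasing degrees `< d`. Since `1 ∈ G` and the left multipliers of `G`
form a subring, it suffices that every symbol `[z]` maps `G` into itself. Writing `z = f(x)` with
`deg f < d` and factoring `f`, this reduces to `[p(x)]` for monic irreducible `p`, which is proved
by induction on `deg p`, inserting `[p]` into a sorted word `[q] ⋯`: if `deg q < deg p` use
`[p][q] = ε[q][p]`; if `p = q` use `[p][p] = ε[-1][p]`; if `deg p = deg q` use Milnor's identity
`[p][q] = [p][q - p] - [q][q - p] + ε[-1][q]`, where `q - p` has smaller degree.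
-/

/-- Axiomatization of the Milnor–Witt K-theory of a field `K`: a (not necessarily
commutative) ring `A` with symbols `[u]` for `u ∈ K^×` and an element `η`, subject to
Morel's relations, and generated as a ring by the symbols and `η`. -/
structure MWKData (K : Type) [Field K] (A : Type) [Ring A] : Type where
  /-- the symbol `[u]` (only meaningful for `u ≠ 0`) -/
  sym : K → A
  /-- the element `η` -/
  eta : A
  steinberg : ∀ u : K, u ≠ 0 → u ≠ 1 → sym u * sym (1 - u) = 0
  sym_mul : ∀ u v : K, u ≠ 0 → v ≠ 0 →
    sym (u * v) = sym u + sym v + eta * sym u * sym v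
  eta_comm : ∀ u : K, u ≠ 0 → sym u * eta = eta * sym u
  eta_rel : eta * (2 + eta * sym (-1)) = 0
  generates : Subring.closure (sym '' {u : K | u ≠ 0} ∪ {eta}) = ⊤

namespace MWKData

variable {K A : Type} [Field K] [Ring A] (mw : MWKData K A)

/-- The element written `⟨u⟩` in Milnor–Witt K-theory. -/
def angle (u : K) : A := 1 + mw.eta * mw.sym u

/-- `ε = -⟨-1⟩`, the sign in graded commutativity `[a][b] = ε[b][a]`. -/
def eps : A := -mw.angle (-1)

theorem eq_top_of_sym_mem_of_eta_mem {S : Subring A} (hsym : ∀ u, u ≠ 0 → mw.sym u ∈ S)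
    (heta : mw.eta ∈ S) : S = ⊤ := by
  rw [eq_top_iff, ← mw.generates, Subring.closure_le]
  rintro _ (⟨u, hu, rfl⟩ | rfl)
  exacts [hsym u hu, heta]

theorem eta_mul_sym_mul_sym_comm {u v : K} (hu : u ≠ 0) (hv : v ≠ 0) :
    mw.eta * (mw.sym u * mw.sym v) = mw.eta * (mw.sym v * mw.sym u) := by
  have h := mw.sym_mul u v hu hv
  rw [mul_comm u v, mw.sym_mul v u hv hu, add_comm (mw.sym v)] at h
  simpa only [mul_assoc] using (add_left_cancel h).symm

theorem commute_angle {z : K} (hz : z ≠ 0) (y : A) : Commute (mw.angle z) y := by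
  have h : Subring.centralizer {mw.angle z} = ⊤ := by
    refine mw.eq_top_of_sym_mem_of_eta_mem (fun u hu => ?_) ?_ <;>
      rw [Subring.mem_centralizer_iff] <;> rintro _ rfl <;>
      simp only [angle, mul_add, add_mul, one_mul, mul_one, add_right_inj]
    · rw [mul_assoc, mw.eta_mul_sym_mul_sym_comm hz hu, ← mul_assoc, ← mul_assoc (mw.sym u),
        mw.eta_comm u hu]
    · rw [mul_assoc, mw.eta_comm z hz]
  have hy : y ∈ Subring.centralizer {mw.angle z} := h ▸ Subring.mem_top y
  exact Subring.mem_centralizer_iff.mp hy _ rfl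

theorem sym_mul_eq_add_angle_mul {u v : K} (hu : u ≠ 0) (hv : v ≠ 0) :
    mw.sym (u * v) = mw.sym u + mw.angle u * mw.sym v := by
  rw [mw.sym_mul u v hu hv, angle]; noncomm_ring

theorem angle_mul {u v : K} (hu : u ≠ 0) (hv : v ≠ 0) :
    mw.angle (u * v) = mw.angle u * mw.angle v := by
  have h : mw.eta * mw.sym u * (mw.eta * mw.sym v) = mw.eta * (mw.eta * mw.sym u * mw.sym v) := by
    rw [mul_assoc, ← mul_assoc (mw.sym u), mw.eta_comm u hu, mul_assoc]
  calc mw.angle (u * v)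
      = 1 + mw.eta * mw.sym u + mw.eta * mw.sym v + mw.eta * (mw.eta * mw.sym u * mw.sym v) := by
        rw [angle, mw.sym_mul u v hu hv]; noncomm_ring
    _ = mw.angle u * mw.angle v := by rw [← h, angle, angle]; noncomm_ring

variable [Nontrivial Kˣ]

/-- Needs a Steinberg relation, hence a field with more than two elements. -/
theorem sym_one : mw.sym 1 = 0 := by
  obtain ⟨w, hw⟩ := exists_ne (1 : Kˣ)
  have hw0 : (w : K) ≠ 0 := w.ne_zero
  have hw1 : (w : K) ≠ 1 := by rwa [Ne, Units.val_eq_one]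
  have hw1' : 1 - (w : K) ≠ 0 := sub_ne_zero.mpr hw1.symm
  -- `[u · 1] = [u] + [1] + η[u][1]` shows `η[u][1] = -[1]`;
  -- apply this to `u = w`, `1 - w` and `w(1 - w)`.
  have key : ∀ u : K, u ≠ 0 → mw.eta * mw.sym u * mw.sym 1 = -mw.sym 1 := fun u hu => by
    have h := mw.sym_mul u 1 hu one_ne_zero
    rw [mul_one, add_assoc, left_eq_add] at h
    exact eq_neg_of_add_eq_zero_right h
  have h := key _ (mul_ne_zero hw0 hw1')
  rw [mw.sym_mul _ _ hw0 hw1'] at h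
  have hst := mw.steinberg w hw0 hw1
  rw [show mw.eta * (mw.sym w + mw.sym (1 - w) + mw.eta * mw.sym w * mw.sym (1 - w)) * mw.sym 1
      = mw.eta * mw.sym w * mw.sym 1 + mw.eta * mw.sym (1 - w) * mw.sym 1
        + mw.eta * mw.eta * (mw.sym w * mw.sym (1 - w)) * mw.sym 1 by noncomm_ring,
    key w hw0, key _ hw1', hst] at h
  simpa using h

theorem angle_one : mw.angle 1 = 1 := by
  rw [angle, mw.sym_one, mul_zero, add_zero]

theorem angle_inv_mul_angle {u : K} (hu : u ≠ 0) : mw.angle u⁻¹ * mw.angle u = 1 := by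
  rw [← mw.angle_mul (inv_ne_zero hu) hu, inv_mul_cancel₀ hu, mw.angle_one]

theorem angle_mul_sym_inv {u : K} (hu : u ≠ 0) : mw.angle u * mw.sym u⁻¹ = -mw.sym u := by
  have h := mw.sym_mul_eq_add_angle_mul hu (inv_ne_zero hu)
  rw [mul_inv_cancel₀ hu, mw.sym_one] at h
  exact eq_neg_of_add_eq_zero_right h.symm

theorem eps_mul_eps : mw.eps * mw.eps = 1 := by
  have h := mw.angle_mul (neg_ne_zero.mpr one_ne_zero) (neg_ne_zero.mpr (one_ne_zero (α := K)))
  rw [neg_one_mul, neg_neg, mw.angle_one] at h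
  rw [eps, neg_mul_neg, h]

theorem sym_mul_sym_neg {u : K} (hu : u ≠ 0) : mw.sym u * mw.sym (-u) = 0 := by
  rcases eq_or_ne u 1 with rfl | hu1
  · rw [mw.sym_one, zero_mul]
  have hv : 1 - u⁻¹ ≠ 0 := sub_ne_zero.mpr (by simpa [eq_comm] using hu1)
  -- `1 - u = (1 - u⁻¹)(-u)`, and `[u][1 - u⁻¹] = -⟨u⟩[u⁻¹][1 - u⁻¹] = 0` by Steinberg for
  -- `u⁻¹`; the unit `⟨1 - u⁻¹⟩` then cancels.
  have huv : mw.sym u * mw.sym (1 - u⁻¹) = 0 := by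
    rw [← neg_neg (mw.sym u), ← mw.angle_mul_sym_inv hu, neg_mul, mul_assoc,
      mw.steinberg _ (inv_ne_zero hu) (by simpa using hu1), mul_zero, neg_zero]
  have h := mw.steinberg u hu hu1
  rw [show 1 - u = (1 - u⁻¹) * -u by field_simp; ring,
    mw.sym_mul_eq_add_angle_mul hv (neg_ne_zero.mpr hu), mul_add, huv, zero_add, ← mul_assoc,
    ← (mw.commute_angle hv _).eq, mul_assoc] at h
  rw [← one_mul (_ * _), ← mw.angle_inv_mul_angle hv, mul_assoc, h, mul_zero]

/-- Expand `[ba][b(-a)] = 0` with `[bu] = [b] + ⟨b⟩[u]` and cancel the unit `⟨b⟩`. -/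
theorem sym_mul_comm {a b : K} (ha : a ≠ 0) (hb : b ≠ 0) :
    mw.sym a * mw.sym b = mw.eps * (mw.sym b * mw.sym a) := by
  have hm1 : (-1 : K) ≠ 0 := neg_ne_zero.mpr one_ne_zero
  have hl : ∀ y z : A, y * (mw.angle b * z) = mw.angle b * (y * z) := fun y z =>
    ((mw.commute_angle hb y).left_comm z).symm
  have hbb : mw.sym b * mw.sym b = -(mw.angle b * (mw.sym b * mw.sym (-1))) := by
    have h := mw.sym_mul_sym_neg hb
    rw [← mul_neg_one b, mw.sym_mul_eq_add_angle_mul hb hm1, mul_add, hl] at h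
    exact eq_neg_of_add_eq_zero_left h
  have h := mw.sym_mul_sym_neg (mul_ne_zero hb ha)
  rw [show -(b * a) = b * -a by ring, mw.sym_mul_eq_add_angle_mul hb ha,
    mw.sym_mul_eq_add_angle_mul hb (neg_ne_zero.mpr ha)] at h
  simp only [add_mul, mul_add, mul_assoc, hl, mw.sym_mul_sym_neg ha, mul_zero, add_zero,
    hbb] at h
  have h' : mw.sym b * mw.sym (-a) - mw.sym b * mw.sym (-1) + mw.sym a * mw.sym b = 0 := by
    have hc : mw.angle b * (mw.sym b * mw.sym (-a) - mw.sym b * mw.sym (-1)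
        + mw.sym a * mw.sym b) = 0 := by rw [← h]; noncomm_ring
    rw [← one_mul (_ + _), ← mw.angle_inv_mul_angle hb, mul_assoc, hc, mul_zero]
  rw [← neg_one_mul a, mw.sym_mul_eq_add_angle_mul hm1 ha, mul_add,
    ← (mw.commute_angle hm1 _).left_comm] at h'
  calc mw.sym a * mw.sym b
      = -(mw.angle (-1) * (mw.sym b * mw.sym a)) + (mw.sym b * mw.sym (-1)
          + mw.angle (-1) * (mw.sym b * mw.sym a) - mw.sym b * mw.sym (-1)
          + mw.sym a * mw.sym b) := by noncomm_ring
    _ = mw.eps * (mw.sym b * mw.sym a) := by rw [h', add_zero, eps, neg_mul]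

theorem sym_mul_self {u : K} (hu : u ≠ 0) :
    mw.sym u * mw.sym u = mw.eps * (mw.sym (-1) * mw.sym u) := by
  have h := mw.sym_mul_sym_neg (neg_ne_zero.mpr hu)
  rw [neg_neg, ← neg_one_mul u, mw.sym_mul_eq_add_angle_mul (neg_ne_zero.mpr one_ne_zero) hu,
    add_mul, mul_assoc] at h
  calc mw.sym u * mw.sym u = mw.eps * (mw.eps * (mw.sym u * mw.sym u)) := by
        rw [← mul_assoc, mw.eps_mul_eps, one_mul]
    _ = mw.eps * (mw.sym (-1) * mw.sym u) := by
        congr 1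
        rw [eps, neg_mul, eq_neg_of_add_eq_zero_right h, neg_neg]

/-- Milnor's identity; it comes from the Steinberg relation for `u / v`. -/
theorem sym_mul_sym_eq {u v : K} (hu : u ≠ 0) (hv : v ≠ 0) (huv : u ≠ v) :
    mw.sym u * mw.sym v = mw.sym u * mw.sym (v - u) - mw.sym v * mw.sym (v - u)
      + mw.eps * (mw.sym (-1) * mw.sym v) := by
  have ha : u / v ≠ 0 := div_ne_zero hu hv
  have ha1 : u / v ≠ 1 := by rwa [Ne, div_eq_one_iff_eq hv]
  have h1a : 1 - u / v ≠ 0 := sub_ne_zero.mpr ha1.symm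
  have hu' : mw.sym u - mw.sym v = mw.angle v * mw.sym (u / v) := by
    rw [← mul_div_cancel₀ u hv, mw.sym_mul_eq_add_angle_mul hv ha, mul_div_cancel₀ u hv]
    abel
  have hvu : mw.sym (v - u) - mw.sym v = mw.angle v * mw.sym (1 - u / v) := by
    rw [show v - u = v * (1 - u / v) by field_simp, mw.sym_mul_eq_add_angle_mul hv h1a]
    abel
  have h0 : (mw.sym u - mw.sym v) * (mw.sym (v - u) - mw.sym v) = 0 := by
    rw [hu', hvu, mul_assoc, ← (mw.commute_angle hv _).left_comm, mw.steinberg _ ha ha1,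
      mul_zero, mul_zero]
  calc mw.sym u * mw.sym v
      = mw.sym u * mw.sym (v - u) - mw.sym v * mw.sym (v - u) + mw.sym v * mw.sym v
        - (mw.sym u - mw.sym v) * (mw.sym (v - u) - mw.sym v) := by noncomm_ring
    _ = _ := by rw [h0, sub_zero, mw.sym_mul_self hv]

end MWKData

namespace AddSubgroup

variable {R : Type*} [Ring R]

def leftMultipliers (H : AddSubgroup R) : Subring R where
  carrier := {c | ∀ y ∈ H, c * y ∈ H}
  mul_mem' ha hb y hy := by rw [mul_assoc]; exact ha _ (hb y hy)
  one_mem' y hy := by rwa [one_mul]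
  add_mem' ha hb y hy := by rw [add_mul]; exact add_mem (ha y hy) (hb y hy)
  zero_mem' y _ := by rw [zero_mul]; exact zero_mem H
  neg_mem' ha y hy := by rw [neg_mul]; exact neg_mem (ha y hy)

theorem mem_leftMultipliers_closure {S : Set R} {c : R} (h : ∀ s ∈ S, c * s ∈ closure S) :
    c ∈ (closure S).leftMultipliers := fun _ hy =>
  (closure_le (K := (closure S).comap (AddMonoidHom.mulLeft c))).mpr h hy

theorem eq_top_of_leftMultipliers_eq_top {H : AddSubgroup R} (h1 : 1 ∈ H)
    (h : H.leftMultipliers = ⊤) : H = ⊤ :=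
  eq_top_iff.mpr fun c _ => mul_one c ▸ (h ▸ Subring.mem_top c : c ∈ H.leftMultipliers) 1 h1

end AddSubgroup

open Polynomial

theorem minpoly.aeval_ne_zero_of_natDegree_lt {E K : Type*} [Field E] [Ring K]
    [Algebra E K] {x : K} {f : E[X]} (hf : f ≠ 0) (h : f.natDegree < (minpoly E x).natDegree) :
    Polynomial.aeval x f ≠ 0 := fun h0 =>
  h.not_ge (natDegree_le_natDegree (minpoly.degree_le_of_ne_zero E x hf h0))

theorem nontrivial_units_of_one_lt_natDegree_minpoly {E K : Type*} [Field E] [Field K]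
    [Algebra E K] {x : K} (h : 1 < (minpoly E x).natDegree) : Nontrivial Kˣ := by
  have hx0 : x ≠ 0 := by
    simpa using
      minpoly.aeval_ne_zero_of_natDegree_lt (X_ne_zero (R := E)) (by rwa [natDegree_X])
  have hx1 : x - 1 ≠ 0 := by
    have := minpoly.aeval_ne_zero_of_natDegree_lt (X_sub_C_ne_zero (1 : E))
      (by rwa [natDegree_X_sub_C])
    rwa [aeval_sub, aeval_X, aeval_C, map_one] at this
  exact nontrivial_of_ne (Units.mk0 x hx0) 1 (by simpa [Units.ext_iff, sub_eq_zero] using hx1)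

def IsAdmissible {E : Type*} [Field E] (d : ℕ) (L : List E[X]) : Prop :=
  (∀ p ∈ L, p.Monic ∧ Irreducible p ∧ p.natDegree < d) ∧
    L.Pairwise (fun p q => p.natDegree < q.natDegree)

section IsAdmissible

variable {E : Type*} [Field E] {d : ℕ} {p q : E[X]} {L : List E[X]}

theorem IsAdmissible.nil : IsAdmissible d ([] : List E[X]) :=
  ⟨by simp, .nil⟩

theorem isAdmissible_cons : IsAdmissible d (p :: L) ↔
    (p.Monic ∧ Irreducible p ∧ p.natDegree < d) ∧ (∀ q ∈ L, p.natDegree < q.natDegree) ∧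
      IsAdmissible d L := by
  simp only [IsAdmissible, List.mem_cons, forall_eq_or_imp, List.pairwise_cons]
  tauto

theorem IsAdmissible.cons_of_natDegree_eq (hL : IsAdmissible d (q :: L)) (hp : p.Monic)
    (hpi : Irreducible p) (h : p.natDegree = q.natDegree) : IsAdmissible d (p :: L) := by
  obtain ⟨⟨-, -, hqd⟩, hqL, hL⟩ := isAdmissible_cons.mp hL
  exact isAdmissible_cons.mpr ⟨⟨hp, hpi, h ▸ hqd⟩, h ▸ hqL, hL⟩

theorem IsAdmissible.cons_of_natDegree_lt (hL : IsAdmissible d (q :: L)) (hp : p.Monic)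
    (hpi : Irreducible p) (h : p.natDegree < q.natDegree) : IsAdmissible d (p :: q :: L) := by
  obtain ⟨⟨-, -, hqd⟩, hqL, -⟩ := isAdmissible_cons.mp hL
  refine isAdmissible_cons.mpr ⟨⟨hp, hpi, h.trans hqd⟩, ?_, hL⟩
  simpa only [List.mem_cons, forall_eq_or_imp] using ⟨h, fun r hr => h.trans (hqL r hr)⟩

end IsAdmissible

namespace MWKData

variable {E K A : Type} [Field E] [Field K] [Algebra E K] [Ring A] (mw : MWKData K A)

variable (E) in
/-- The image of `K^MW(E)` in `K^MW(K)`. -/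
def baseSubring : Subring A :=
  Subring.closure ((fun c : E => mw.sym (algebraMap E K c)) '' {c | c ≠ 0} ∪ {mw.eta})

theorem sym_algebraMap_mem_baseSubring {c : E} (hc : c ≠ 0) :
    mw.sym (algebraMap E K c) ∈ mw.baseSubring E :=
  Subring.subset_closure (.inl ⟨c, hc, rfl⟩)

theorem eta_mem_baseSubring : mw.eta ∈ mw.baseSubring E :=
  Subring.subset_closure (.inr rfl)

theorem sym_neg_one_mem_baseSubring : mw.sym (-1) ∈ mw.baseSubring E := by
  simpa using mw.sym_algebraMap_mem_baseSubring (neg_ne_zero.mpr (one_ne_zero (α := E)))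

theorem eps_mem_baseSubring : mw.eps ∈ mw.baseSubring E :=
  neg_mem (add_mem (one_mem _) (mul_mem mw.eta_mem_baseSubring mw.sym_neg_one_mem_baseSubring))

theorem exists_sym_mul_eq_mul_sym [Nontrivial Kˣ] {z : K} (hz : z ≠ 0) {r : A}
    (hr : r ∈ mw.baseSubring E) : ∃ r' ∈ mw.baseSubring E, mw.sym z * r = r' * mw.sym z := by
  induction hr using Subring.closure_induction with
  | mem r hr =>
    rcases hr with ⟨c, hc, rfl⟩ | rfl
    · have hc' : algebraMap E K c ≠ 0 := (_root_.map_ne_zero _).mpr hc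
      exact ⟨_, mul_mem mw.eps_mem_baseSubring (mw.sym_algebraMap_mem_baseSubring hc),
        by rw [mw.sym_mul_comm hz hc', mul_assoc]⟩
    · exact ⟨_, mw.eta_mem_baseSubring, mw.eta_comm z hz⟩
  | zero => exact ⟨0, zero_mem _, by simp⟩
  | one => exact ⟨1, one_mem _, by simp⟩
  | add _ _ _ _ ha hb =>
    obtain ⟨a, ha, ea⟩ := ha
    obtain ⟨b, hb, eb⟩ := hb
    exact ⟨a + b, add_mem ha hb, by rw [mul_add, ea, eb, add_mul]⟩
  | neg _ _ ha =>
    obtain ⟨a, ha, ea⟩ := ha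
    exact ⟨-a, neg_mem ha, by rw [mul_neg, ea, neg_mul]⟩
  | mul _ _ _ _ ha hb =>
    obtain ⟨a, ha, ea⟩ := ha
    obtain ⟨b, hb, eb⟩ := hb
    exact ⟨a * b, mul_mem ha hb, by rw [← mul_assoc, ea, mul_assoc, eb, mul_assoc]⟩

theorem sym_mul_mem {M : Subring A} (hη : mw.eta ∈ M) {u v : K} (hu : u ≠ 0) (hv : v ≠ 0)
    (hsu : mw.sym u ∈ M) (hsv : mw.sym v ∈ M) : mw.sym (u * v) ∈ M := by
  rw [mw.sym_mul u v hu hv]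
  exact add_mem (add_mem hsu hsv) (mul_mem (mul_mem hη hsu) hsv)

theorem sym_aeval_mem {M : Subring A} (hM : mw.baseSubring E ≤ M) {x : K} {f : E[X]}
    (hf : aeval x f ≠ 0)
    (hirr : ∀ p : E[X], p.Monic → Irreducible p → p ∣ f → mw.sym (aeval x p) ∈ M) :
    mw.sym (aeval x f) ∈ M := by
  induction f using WfDvdMonoid.induction_on_irreducible with
  | zero => simp at hf
  | unit u hu =>
    obtain ⟨c, hc, rfl⟩ := Polynomial.isUnit_iff.mp hu
    rw [aeval_C]
    exact hM (mw.sym_algebraMap_mem_baseSubring hc.ne_zero)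
  | mul a p _ hp ih =>
    rw [map_mul] at hf ⊢
    have hp0 : p ≠ 0 := hp.ne_zero
    have hc : p.leadingCoeff ≠ 0 := leadingCoeff_ne_zero.mpr hp0
    have hpq : p = C p.leadingCoeff * (p * C p.leadingCoeff⁻¹) := by
      rw [mul_left_comm, ← C_mul, mul_inv_cancel₀ hc, C_1, mul_one]
    have hu : IsUnit (C p.leadingCoeff⁻¹) := isUnit_C.mpr (inv_ne_zero hc).isUnit
    have hp' : aeval x p ≠ 0 := left_ne_zero_of_mul hf
    have hqx : aeval x (p * C p.leadingCoeff⁻¹) ≠ 0 := by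
      rw [map_mul, aeval_C]; exact mul_ne_zero hp' (by simpa using hc)
    refine mw.sym_mul_mem (hM mw.eta_mem_baseSubring) hp' (right_ne_zero_of_mul hf) ?_
      (ih (right_ne_zero_of_mul hf) fun q hq hqi hqa =>
        hirr q hq hqi (dvd_mul_of_dvd_right hqa p))
    rw [hpq, map_mul, aeval_C]
    refine mw.sym_mul_mem (hM mw.eta_mem_baseSubring) ((_root_.map_ne_zero _).mpr hc) hqx
      (hM (mw.sym_algebraMap_mem_baseSubring hc)) ?_
    exact hirr _ (monic_mul_leadingCoeff_inv hp0) ((irreducible_mul_isUnit hu).mpr hp)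
      (hu.mul_right_dvd.mpr (dvd_mul_right p a))

noncomputable def symWord (x : K) (L : List E[X]) : A :=
  (L.map fun p => mw.sym (aeval x p)).prod

@[simp]
theorem symWord_nil (x : K) : mw.symWord x ([] : List E[X]) = 1 :=
  rfl

@[simp]
theorem symWord_cons (x : K) (p : E[X]) (L : List E[X]) :
    mw.symWord x (p :: L) = mw.sym (aeval x p) * mw.symWord x L :=
  List.prod_cons

theorem symWord_eq_prod_ofFn (x : K) (L : List E[X]) :
    mw.symWord x L = (List.ofFn fun i => mw.sym (aeval x (L.get i))).prod := by
  conv_lhs => rw [← List.ofFn_get L]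
  rw [symWord, List.map_ofFn]
  rfl

variable (E) in
def wordSpan (x : K) (d : ℕ) : AddSubgroup A :=
  AddSubgroup.closure
    {y | ∃ r ∈ mw.baseSubring E, ∃ L : List E[X], IsAdmissible d L ∧ y = r * mw.symWord x L}

variable {mw} {x : K} {d : ℕ}

theorem mul_symWord_mem_wordSpan {r : A} (hr : r ∈ mw.baseSubring E) {L : List E[X]}
    (hL : IsAdmissible d L) : r * mw.symWord x L ∈ mw.wordSpan E x d :=
  AddSubgroup.subset_closure ⟨r, hr, L, hL, rfl⟩

theorem symWord_mem_wordSpan {L : List E[X]} (hL : IsAdmissible d L) :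
    mw.symWord x L ∈ mw.wordSpan E x d :=
  one_mul (mw.symWord x L) ▸ mul_symWord_mem_wordSpan (one_mem _) hL

theorem baseSubring_le_leftMultipliers :
    mw.baseSubring E ≤ (mw.wordSpan E x d).leftMultipliers := fun r hr =>
  AddSubgroup.mem_leftMultipliers_closure <| by
    rintro _ ⟨r', hr', L, hL, rfl⟩
    rw [← mul_assoc]
    exact mul_symWord_mem_wordSpan (mul_mem hr hr') hL

theorem sym_mul_sym_mul_symWord_mem_of_natDegree_eq [Nontrivial Kˣ]
    (hd : d ≤ (minpoly E x).natDegree) {f q : E[X]} {L : List E[X]} (hf : f.Monic)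
    (hfi : Irreducible f) (hqL : IsAdmissible d (q :: L)) (heq : f.natDegree = q.natDegree)
    (hlow : ∀ g : E[X], g ≠ 0 → g.natDegree < f.natDegree →
      mw.sym (aeval x g) ∈ (mw.wordSpan E x d).leftMultipliers) :
    mw.sym (aeval x f) * (mw.sym (aeval x q) * mw.symWord x L) ∈ mw.wordSpan E x d := by
  obtain ⟨⟨hq, -, hqd⟩, -, -⟩ := isAdmissible_cons.mp hqL
  have hval : ∀ g : E[X], g ≠ 0 → g.natDegree < d → aeval x g ≠ 0 := fun g hg h =>
    minpoly.aeval_ne_zero_of_natDegree_lt hg (h.trans_le hd)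
  have hfx := hval f hf.ne_zero (heq ▸ hqd)
  have hqx := hval q hq.ne_zero hqd
  have hε := baseSubring_le_leftMultipliers (x := x) (d := d)
    (mw.eps_mem_baseSubring (E := E))
  have hm1 := baseSubring_le_leftMultipliers (x := x) (d := d)
    (mw.sym_neg_one_mem_baseSubring (E := E))
  have hqW : mw.sym (aeval x q) * mw.symWord x L ∈ mw.wordSpan E x d := by
    simpa using symWord_mem_wordSpan (x := x) hqL
  rcases eq_or_ne f q with rfl | hne
  · rw [← mul_assoc, mw.sym_mul_self hfx, mul_assoc, mul_assoc]
    exact hε _ (hm1 _ hqW)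
  have hfW : mw.sym (aeval x f) * mw.symWord x L ∈ mw.wordSpan E x d := by
    simpa using symWord_mem_wordSpan (x := x) (hqL.cons_of_natDegree_eq hf hfi heq)
  -- Milnor's identity replaces `[f][q]` by terms containing `[q - f]`, of smaller degree.
  have hh0 : q - f ≠ 0 := sub_ne_zero.mpr hne.symm
  have hhd : (q - f).natDegree < f.natDegree :=
    IsMonicOfDegree.natDegree_sub_lt hfi.natDegree_pos.ne' ⟨heq.symm, hq⟩ ⟨rfl, hf⟩
  have hhx := hval _ hh0 (hhd.trans (heq ▸ hqd))
  have hne' : aeval x f ≠ aeval x q := fun e => hhx (by rw [map_sub, e, sub_self])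
  rw [← mul_assoc, mw.sym_mul_sym_eq hfx hqx hne', ← map_sub]
  have key : (mw.sym (aeval x f) * mw.sym (aeval x (q - f))
      - mw.sym (aeval x q) * mw.sym (aeval x (q - f))
      + mw.eps * (mw.sym (-1) * mw.sym (aeval x q))) * mw.symWord x L
      = mw.eps * (mw.sym (aeval x (q - f)) * (mw.sym (aeval x f) * mw.symWord x L))
        - mw.eps * (mw.sym (aeval x (q - f)) * (mw.sym (aeval x q) * mw.symWord x L))
        + mw.eps * (mw.sym (-1) * (mw.sym (aeval x q) * mw.symWord x L)) := by
    rw [mw.sym_mul_comm hfx hhx, mw.sym_mul_comm hqx hhx]; noncomm_ring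
  have hhM := hlow _ hh0 hhd
  rw [key]
  exact add_mem (sub_mem (hε _ (hhM _ hfW)) (hε _ (hhM _ hqW))) (hε _ (hm1 _ hqW))

theorem sym_mul_symWord_mem [Nontrivial Kˣ] (hd : d ≤ (minpoly E x).natDegree) {f : E[X]}
    (hf : f.Monic) (hfi : Irreducible f) (hfd : f.natDegree < d)
    (hlow : ∀ g : E[X], g ≠ 0 → g.natDegree < f.natDegree →
      mw.sym (aeval x g) ∈ (mw.wordSpan E x d).leftMultipliers) :
    ∀ {L : List E[X]}, IsAdmissible d L →
      mw.sym (aeval x f) * mw.symWord x L ∈ mw.wordSpan E x d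
  | [], _ => by
    simpa using symWord_mem_wordSpan (mw := mw) (x := x) (L := [f])
      (isAdmissible_cons.mpr ⟨⟨hf, hfi, hfd⟩, by simp, .nil⟩)
  | q :: L, hqL => by
    obtain ⟨⟨hq, -, hqd⟩, -, hL⟩ := isAdmissible_cons.mp hqL
    rw [symWord_cons]
    rcases lt_trichotomy f.natDegree q.natDegree with hlt | heq | hgt
    · simpa using symWord_mem_wordSpan (x := x) (hqL.cons_of_natDegree_lt hf hfi hlt)
    · exact sym_mul_sym_mul_symWord_mem_of_natDegree_eq hd hf hfi hqL heq hlow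
    · have hval : ∀ g : E[X], g.Monic → g.natDegree < d → aeval x g ≠ 0 := fun g hg h =>
        minpoly.aeval_ne_zero_of_natDegree_lt hg.ne_zero (h.trans_le hd)
      rw [← mul_assoc, mw.sym_mul_comm (hval f hf hfd) (hval q hq hqd), mul_assoc, mul_assoc]
      exact baseSubring_le_leftMultipliers (mw.eps_mem_baseSubring (E := E)) _
        (hlow q hq.ne_zero hgt _ (sym_mul_symWord_mem hd hf hfi hfd hlow hL))

theorem sym_aeval_mem_leftMultipliers [Nontrivial Kˣ] (hd : d ≤ (minpoly E x).natDegree)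
    {f : E[X]} (hf : f.Monic) (hfi : Irreducible f) (hfd : f.natDegree < d) :
    mw.sym (aeval x f) ∈ (mw.wordSpan E x d).leftMultipliers := by
  induction hn : f.natDegree using Nat.strong_induction_on generalizing f with
  | _ n ih =>
  have hlow : ∀ g : E[X], g ≠ 0 → g.natDegree < n →
      mw.sym (aeval x g) ∈ (mw.wordSpan E x d).leftMultipliers := fun g hg hgn =>
    mw.sym_aeval_mem baseSubring_le_leftMultipliers
      (minpoly.aeval_ne_zero_of_natDegree_lt hg (by omega)) fun p hp hpi hpg =>
        have := natDegree_le_of_dvd hpg hg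
        ih _ (by omega) hp hpi (by omega) rfl
  refine AddSubgroup.mem_leftMultipliers_closure ?_
  rintro _ ⟨r, hr, L, hL, rfl⟩
  obtain ⟨r', hr', he⟩ := mw.exists_sym_mul_eq_mul_sym
    (minpoly.aeval_ne_zero_of_natDegree_lt hf.ne_zero (hfd.trans_le hd)) hr
  rw [← mul_assoc, he, mul_assoc]
  exact baseSubring_le_leftMultipliers hr' _
    (sym_mul_symWord_mem hd hf hfi hfd (hn ▸ hlow) hL)

theorem wordSpan_eq_top (hint : IsIntegral E x) (hx : Algebra.adjoin E {x} = ⊤) :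
    mw.wordSpan E x (minpoly E x).natDegree = ⊤ := by
  have h1 : (1 : A) ∈ mw.wordSpan E x (minpoly E x).natDegree := by
    simpa using symWord_mem_wordSpan (mw := mw) (x := x) IsAdmissible.nil
  refine AddSubgroup.eq_top_of_leftMultipliers_eq_top h1 ?_
  refine mw.eq_top_of_sym_mem_of_eta_mem (fun z hz => ?_)
    (baseSubring_le_leftMultipliers (mw.eta_mem_baseSubring (E := E)))
  obtain ⟨f, hfd, rfl⟩ := (PowerBasis.ofAdjoinEqTop hint hx).exists_eq_aeval z
  rw [PowerBasis.ofAdjoinEqTop_dim] at hfd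
  refine mw.sym_aeval_mem baseSubring_le_leftMultipliers hz fun p hp hpi hpf => ?_
  have hpd : p.natDegree < (minpoly E x).natDegree :=
    (natDegree_le_of_dvd hpf (by rintro rfl; simp at hz)).trans_lt hfd
  have := nontrivial_units_of_one_lt_natDegree_minpoly (E := E) (x := x)
    (by have := hpi.natDegree_pos; omega)
  exact sym_aeval_mem_leftMultipliers le_rfl hp hpi hpd

end MWKData

/-- Bass–Tate–Morel lemma: for a simple finite extension `K = E(x)` of degree `d`,
Milnor–Witt K-theory `K^MW(K)` is generated as a left `K^MW(E)`-module by the elements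
`η^m · [p₁(x)] ⋯ [p_n(x)]` where the `pᵢ` are monic irreducible polynomials over `E`
of strictly increasing degrees `≤ d - 1`. -/
theorem bass_tate_morel
    (E K : Type) [Field E] [Field K] [Algebra E K] (x : K)
    (hadj : IntermediateField.adjoin E {x} = ⊤)
    (d : ℕ) [FiniteDimensional E K] (hdeg : Module.finrank E K = d)
    (AE AK : Type) [Ring AE] [Ring AK]
    (mwE : MWKData E AE) (mwK : MWKData K AK)
    (res : AE →+* AK)
    (res_sym : ∀ a : E, a ≠ 0 → res (mwE.sym a) = mwK.sym (algebraMap E K a))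
    (res_eta : res mwE.eta = mwK.eta) :
    AddSubgroup.closure {z : AK | ∃ (a : AE) (m nn : ℕ) (q : Fin nn → Polynomial E),
      (∀ i, (q i).Monic ∧ Irreducible (q i)) ∧
      (∀ i j : Fin nn, i < j → (q i).natDegree < (q j).natDegree) ∧
      (∀ i, (q i).natDegree ≤ d - 1) ∧
      z = res a * (mwK.eta ^ m *
        (List.ofFn fun i => mwK.sym (Polynomial.aeval x (q i))).prod)} = ⊤ := by
  have hint : IsIntegral E x := .of_finite E x
  have hd : (minpoly E x).natDegree = d := by
    rw [(Field.primitive_element_iff_minpoly_natDegree_eq E x).mp hadj, hdeg]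
  have hres : mwK.baseSubring E ≤ res.range := Subring.closure_le.mpr <| by
    rintro _ (⟨c, hc, rfl⟩ | rfl)
    exacts [⟨_, res_sym c hc⟩, ⟨_, res_eta⟩]
  rw [eq_top_iff, ← mwK.wordSpan_eq_top hint
    (Algebra.adjoin_eq_top_of_primitive_element hint.isAlgebraic hadj), hd, MWKData.wordSpan,
    AddSubgroup.closure_le]
  rintro _ ⟨r, hr, L, ⟨hL, hsorted⟩, rfl⟩
  obtain ⟨a, rfl⟩ := hres hr
  have hL' (i : Fin L.length) := hL _ (L.get_mem i)
  exact AddSubgroup.subset_closure ⟨a, 0, L.length, L.get, fun i => ⟨(hL' i).1, (hL' i).2.1⟩,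
    fun i j hij => List.pairwise_iff_get.mp hsorted i j hij,
    fun i => Nat.le_sub_one_of_lt (hL' i).2.2,
    by rw [pow_zero, one_mul, mwK.symWord_eq_prod_ofFn]⟩
end
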